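/- (Theorem 1 of the paper.) If the offspring mean of the Galton–Watson branching process satisfies m < 1, then the process dies out eventually: almost surely there exists N such that X_n = 0 for all n ≥ N, and moreover E[X_n] → 0 as n → ∞. -/

import Mathlib

/-!
The offspring counts `ξ (n, i)` are independent of `X n`, which is determined by the earlier
generations, so Wald's identity gives `E[X (n + 1)] = m E[X n]`, hence `E[X n] = m ^ n → 0`.
Since `0` is absorbing, survival forces `X n ≠ 0` for every `n`, an event of probability at most
`E[X n]`.
-/

open MeasureTheory ProbabilityTheory Filter
open scoped ENNReal

lemma sum_range_eq_tsum_indicator_lt {Ω M : Type*} [AddCommMonoid M] [TopologicalSpace M]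
    (N : Ω → ℕ) (Y : ℕ → Ω → M) (ω : Ω) :
    ∑ i ∈ Finset.range (N ω), Y i ω = ∑' i, {ω | i < N ω}.indicator (Y i) ω := by
  rw [sum_eq_tsum_indicator]
  congr with i
  simp [Set.indicator_apply]

section Wald

variable {Ω : Type*} [MeasurableSpace Ω] {μ : Measure Ω}

lemma lintegral_natCast_eq_tsum_measure_lt {N : Ω → ℕ} (hN : Measurable N) :
    ∫⁻ ω, (N ω : ℝ≥0∞) ∂μ = ∑' i, μ {ω | i < N ω} := by
  have hlt (i : ℕ) : MeasurableSet {ω | i < N ω} := measurableSet_lt measurable_const hN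
  have hsum (ω : Ω) : (N ω : ℝ≥0∞) = ∑' i, {ω | i < N ω}.indicator 1 ω := by
    simpa [Pi.one_def] using sum_range_eq_tsum_indicator_lt N (1 : ℕ → Ω → ℝ≥0∞) ω
  simp_rw [hsum]
  rw [lintegral_tsum fun i => (measurable_one.indicator (hlt i)).aemeasurable]
  simp_rw [lintegral_indicator_one (hlt _)]

lemma measure_ne_zero_le_lintegral_natCast {N : Ω → ℕ} (hN : Measurable N) :
    μ {ω | N ω ≠ 0} ≤ ∫⁻ ω, (N ω : ℝ≥0∞) ∂μ := by
  rw [lintegral_natCast_eq_tsum_measure_lt hN]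
  simpa [Nat.pos_iff_ne_zero] using ENNReal.le_tsum (f := fun i => μ {ω | i < N ω}) 0

/-- Wald's identity. -/
theorem lintegral_sum_range_eq_mul_of_indepFun {N : Ω → ℕ} {Y : ℕ → Ω → ℝ≥0∞} {c : ℝ≥0∞}
    (hN : Measurable N) (hY : ∀ i, Measurable (Y i)) (hindep : ∀ i, IndepFun N (Y i) μ)
    (hc : ∀ i, ∫⁻ ω, Y i ω ∂μ = c) :
    ∫⁻ ω, ∑ i ∈ Finset.range (N ω), Y i ω ∂μ = (∫⁻ ω, (N ω : ℝ≥0∞) ∂μ) * c := by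
  have hlt (i : ℕ) : MeasurableSet {ω | i < N ω} := measurableSet_lt measurable_const hN
  have hterm (i : ℕ) : ∫⁻ ω, {ω | i < N ω}.indicator (Y i) ω ∂μ = μ {ω | i < N ω} * c := by
    have hind : IndepFun ((Set.Ioi i).indicator (1 : ℕ → ℝ≥0∞) ∘ N) (id ∘ Y i) μ :=
      (hindep i).comp (measurable_one.indicator measurableSet_Ioi) measurable_id
    rw [← hc i, ← lintegral_indicator_one (hlt i),
      ← lintegral_mul_eq_lintegral_mul_lintegral_of_indepFun
        (measurable_one.indicator (hlt i)) (hY i) hind]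
    congr with ω
    simp [Set.indicator_apply]
  calc ∫⁻ ω, ∑ i ∈ Finset.range (N ω), Y i ω ∂μ
      = ∫⁻ ω, ∑' i, {ω | i < N ω}.indicator (Y i) ω ∂μ := by
        simp_rw [sum_range_eq_tsum_indicator_lt]
    _ = ∑' i, μ {ω | i < N ω} * c := by
        rw [lintegral_tsum fun i => ((hY i).indicator (hlt i)).aemeasurable]
        simp_rw [hterm]
    _ = (∫⁻ ω, (N ω : ℝ≥0∞) ∂μ) * c := by
        rw [ENNReal.tsum_mul_right, lintegral_natCast_eq_tsum_measure_lt hN]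

lemma integral_natCast_eq_toReal_lintegral {N : Ω → ℕ} (hN : Measurable N) :
    ∫ ω, (N ω : ℝ) ∂μ = (∫⁻ ω, (N ω : ℝ≥0∞) ∂μ).toReal := by
  simpa using integral_toReal (measurable_from_top.comp hN).aemeasurable
    (ae_of_all _ fun ω => ENNReal.natCast_lt_top (N ω))

end Wald

lemma measurable_apply_of_measurable_index {α β ι : Type*} {mα : MeasurableSpace α}
    [MeasurableSpace β] [MeasurableSpace ι] [Countable ι] [MeasurableSingletonClass ι]
    {f : α → ι} {g : ι → α → β} (hf : Measurable f) (hg : ∀ i, Measurable (g i)) :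
    Measurable fun a => g (f a) a :=
  (measurable_from_prod_countable_right (f := fun p : ι × α => g p.1 p.2) hg).comp
    (hf.prodMk measurable_id)

section GaltonWatson

variable {Ω : Type*}

def galtonWatson (ξ : ℕ × ℕ → Ω → ℕ) : ℕ → Ω → ℕ
  | 0 => fun _ => 1
  | n + 1 => fun ω => ∑ i ∈ Finset.range (galtonWatson ξ n ω), ξ (n, i) ω

lemma eq_galtonWatson {ξ : ℕ × ℕ → Ω → ℕ} {X : ℕ → Ω → ℕ} (hX0 : ∀ ω, X 0 ω = 1)
    (hXsucc : ∀ n ω, X (n + 1) ω = ∑ i ∈ Finset.range (X n ω), ξ (n, i) ω) :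
    X = galtonWatson ξ := by
  funext n ω
  induction n with
  | zero => exact hX0 ω
  | succ n ih => rw [hXsucc, ih]; rfl

lemma galtonWatson_eq_zero_of_le {ξ : ℕ × ℕ → Ω → ℕ} {ω : Ω} {N n : ℕ}
    (h : galtonWatson ξ N ω = 0) (hNn : N ≤ n) : galtonWatson ξ n ω = 0 := by
  induction n, hNn using Nat.le_induction with
  | base => exact h
  | succ n _ ih => simp [galtonWatson, ih]

lemma measurable_galtonWatson_iSup_comap (ξ : ℕ × ℕ → Ω → ℕ) (n : ℕ) :
    Measurable[⨆ p ∈ {q : ℕ × ℕ | q.1 < n}, MeasurableSpace.comap (ξ p) inferInstance]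
      (galtonWatson ξ n) := by
  induction n with
  | zero => exact measurable_const
  | succ n ih =>
    refine measurable_apply_of_measurable_index (g := fun c ω => ∑ i ∈ Finset.range c, ξ (n, i) ω)
      (ih.mono (biSup_mono fun p (hp : p.1 < n) => Nat.lt_succ_of_lt hp) le_rfl)
      fun c => Finset.measurable_sum _ fun i _ => comap_measurable (ξ (n, i)) |>.mono
        (le_iSup₂ (f := fun p (_ : p ∈ {q : ℕ × ℕ | q.1 < n + 1}) =>
          MeasurableSpace.comap (ξ p) inferInstance) (n, i) (Nat.lt_succ_self n)) le_rfl

variable [MeasurableSpace Ω] {μ : Measure Ω} {ξ : ℕ × ℕ → Ω → ℕ}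

lemma measurable_galtonWatson (hmeas : ∀ p, Measurable (ξ p)) (n : ℕ) :
    Measurable (galtonWatson ξ n) :=
  (measurable_galtonWatson_iSup_comap ξ n).mono (iSup₂_le fun p _ => (hmeas p).comap_le) le_rfl

lemma indepFun_galtonWatson_offspring (hmeas : ∀ p, Measurable (ξ p)) (hindep : iIndepFun ξ μ)
    (n i : ℕ) : IndepFun (galtonWatson ξ n) (ξ (n, i)) μ := by
  have h := indep_iSup_of_disjoint (fun p => (hmeas p).comap_le) hindep
    (S := {q | q.1 < n}) (T := {(n, i)}) (by simp [Set.disjoint_singleton_right])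
  rw [iSup_singleton] at h
  exact indep_of_indep_of_le_left h (measurable_galtonWatson_iSup_comap ξ n).comap_le

lemma lintegral_galtonWatson [IsProbabilityMeasure μ] (hmeas : ∀ p, Measurable (ξ p))
    (hindep : iIndepFun ξ μ) (hident : ∀ p, IdentDistrib (ξ p) (ξ (0, 0)) μ μ) (n : ℕ) :
    ∫⁻ ω, (galtonWatson ξ n ω : ℝ≥0∞) ∂μ = (∫⁻ ω, (ξ (0, 0) ω : ℝ≥0∞) ∂μ) ^ n := by
  induction n with
  | zero => simp [galtonWatson]
  | succ n ih =>
    calc ∫⁻ ω, (galtonWatson ξ (n + 1) ω : ℝ≥0∞) ∂μ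
        = ∫⁻ ω, ∑ i ∈ Finset.range (galtonWatson ξ n ω), (ξ (n, i) ω : ℝ≥0∞) ∂μ := by
          simp [galtonWatson]
      _ = (∫⁻ ω, (galtonWatson ξ n ω : ℝ≥0∞) ∂μ) * ∫⁻ ω, (ξ (0, 0) ω : ℝ≥0∞) ∂μ :=
          lintegral_sum_range_eq_mul_of_indepFun (measurable_galtonWatson hmeas n)
            (fun i => measurable_from_top.comp (hmeas (n, i)))
            (fun i => (indepFun_galtonWatson_offspring hmeas hindep n i).comp measurable_id
              measurable_from_top)
            (fun i => ((hident (n, i)).comp measurable_from_top).lintegral_eq)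
      _ = (∫⁻ ω, (ξ (0, 0) ω : ℝ≥0∞) ∂μ) ^ (n + 1) := by rw [ih, pow_succ]

lemma measure_survival_le_lintegral_galtonWatson (hmeas : ∀ p, Measurable (ξ p)) (n : ℕ) :
    μ {ω | ¬ ∃ N, ∀ k ≥ N, galtonWatson ξ k ω = 0} ≤ ∫⁻ ω, (galtonWatson ξ n ω : ℝ≥0∞) ∂μ := by
  refine (measure_mono ?_).trans
    (measure_ne_zero_le_lintegral_natCast (measurable_galtonWatson hmeas n))
  exact fun ω hω h0 => hω ⟨n, fun k hk => galtonWatson_eq_zero_of_le h0 hk⟩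

end GaltonWatson

/-- (Theorem 1 of the paper.) If the offspring mean `m` of the Galton–Watson
branching process satisfies `m < 1`, then the process dies out eventually:
almost surely there is an `N` with `X n = 0` for all `n ≥ N`, and moreover
`E[X n] → 0` as `n → ∞`. -/
theorem galtonWatson_dies_out_of_mean_lt_one
    {Ω : Type*} [MeasurableSpace Ω] (μ : Measure Ω) [IsProbabilityMeasure μ]
    (ξ : ℕ × ℕ → Ω → ℕ)
    (hmeas : ∀ p, Measurable (ξ p))
    (hindep : iIndepFun ξ μ)
    (hident : ∀ p, IdentDistrib (ξ p) (ξ (0, 0)) μ μ)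
    (hint : Integrable (fun ω => (ξ (0, 0) ω : ℝ)) μ)
    (m : ℝ) (hm : m = ∫ ω, (ξ (0, 0) ω : ℝ) ∂μ)
    (X : ℕ → Ω → ℕ)
    (hX0 : ∀ ω, X 0 ω = 1)
    (hXsucc : ∀ n ω, X (n + 1) ω = ∑ i ∈ Finset.range (X n ω), ξ (n, i) ω)
    (hmlt : m < 1) :
    (∀ᵐ ω ∂μ, ∃ N : ℕ, ∀ n ≥ N, X n ω = 0)
    ∧ Tendsto (fun n : ℕ => ∫ ω, (X n ω : ℝ) ∂μ) atTop (nhds 0) := by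
  obtain rfl := eq_galtonWatson hX0 hXsucc
  have hmean : ∫⁻ ω, (ξ (0, 0) ω : ℝ≥0∞) ∂μ = ENNReal.ofReal m := by
    rw [hm, ofReal_integral_eq_lintegral_ofReal hint (ae_of_all _ fun ω => by positivity)]
    simp
  have hE (n : ℕ) : ∫⁻ ω, (galtonWatson ξ n ω : ℝ≥0∞) ∂μ = ENNReal.ofReal m ^ n := by
    rw [lintegral_galtonWatson hmeas hindep hident, hmean]
  have hlim : Tendsto (fun n => ENNReal.ofReal m ^ n) atTop (nhds 0) :=
    ENNReal.tendsto_pow_atTop_nhds_zero_of_lt_one (ENNReal.ofReal_lt_one.mpr hmlt)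
  refine ⟨ae_iff.2 <| le_antisymm (ge_of_tendsto' hlim fun n => ?_) bot_le, ?_⟩
  · exact (measure_survival_le_lintegral_galtonWatson hmeas n).trans_eq (hE n)
  · simp_rw [integral_natCast_eq_toReal_lintegral (measurable_galtonWatson hmeas _), hE]
    simpa only [Function.comp_def, ENNReal.toReal_zero] using
      (ENNReal.tendsto_toReal ENNReal.zero_ne_top).comp hlim
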